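/- Let V be a 4-dimensional vector space over an algebraically closed field k and let θ : V → V be a linear automorphism. Let R = span{x ⊗ y − y ⊗ θ(x) : x, y ∈ V} ⊆ V ⊗ V. Then for every 2-dimensional subspace Q ⊆ V, the intersection (Q ⊗ V) ∩ R is nonzero. -/

import Mathlib

open TensorProduct

/-- The subspace `Q ⊗ V` of `V ⊗ V`, i.e. the image of `Q ⊗ V → V ⊗ V`. -/
noncomputable def leftTensor {k V : Type*} [Field k] [AddCommGroup V] [Module k V]
    (Q : Submodule k V) : Submodule k (V ⊗[k] V) :=
  LinearMap.range (TensorProduct.map Q.subtype LinearMap.id)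

theorem stmt1 {k V : Type*} [Field k] [IsAlgClosed k] [AddCommGroup V] [Module k V]
    (hV : Module.finrank k V = 4)
    (θ : V ≃ₗ[k] V)
    (R : Submodule k (V ⊗[k] V))
    (hR : R = Submodule.span k {z : V ⊗[k] V | ∃ x y : V, z = x ⊗ₜ y - y ⊗ₜ (θ x)})
    (Q : Submodule k V) (hQ : Module.finrank k Q = 2) :
    leftTensor Q ⊓ R ≠ ⊥ := by
  haveI : FiniteDimensional k Q := FiniteDimensional.of_finrank_eq_succ hQ
  -- basis of Q
  let b : Module.Basis (Fin 2) k Q := Module.finBasisOfFinrankEq k Q hQ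
  set a : Q := b 0 with ha
  set c : Q := b 1 with hc
  have hind : LinearIndependent k (⇑Q.subtype ∘ fun i : Fin 2 => if i = 0 then a else c) := by
    have h1 : LinearIndependent k (fun i : Fin 2 => (if i = 0 then a else c)) := by
      have := b.linearIndependent
      convert this using 1
      funext i
      fin_cases i <;> simp [ha, hc]
    exact h1.map' Q.subtype (Submodule.ker_subtype Q)
  set x : V := (a : V) with hx
  set y : V := (c : V) with hy
  have hxy : ∀ (s t : k), s • x + t • y = 0 → s = 0 ∧ t = 0 := by
    intro s t hst
    have := Fintype.linearIndependent_iff.mp hind ![s, t] ?_ 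
    · exact ⟨this 0, this 1⟩
    · simpa [Fin.sum_univ_two, Function.comp, hx, hy] using hst
  have hx0 : x ≠ 0 := by
    intro h
    have := (hxy 1 0 (by simp [h])).1
    simp at this
  -- find f : Dual with f x = 0, f y = 1-ish (f y ≠ 0)
  have hyx : y ∉ Submodule.span k {x} := by
    intro hmem
    rw [Submodule.mem_span_singleton] at hmem
    obtain ⟨s, hs⟩ := hmem
    have := (hxy s (-1) (by rw [hs]; simp)).2
    simp at this
  obtain ⟨f, hfx, hfy⟩ : ∃ f : Module.Dual k V, f x = 0 ∧ f y ≠ 0 := by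
    let p := Submodule.span k {x}
    have hne : (Submodule.Quotient.mk y : V ⧸ p) ≠ 0 := by
      simpa [Submodule.Quotient.mk_eq_zero] using hyx
    obtain ⟨g, hg⟩ : ∃ g : Module.Dual k (V ⧸ p), g (Submodule.Quotient.mk y) ≠ 0 := by
      by_contra h
      push_neg at h
      exact hne ((Module.forall_dual_apply_eq_zero_iff k _).mp h)
    refine ⟨g.comp p.mkQ, ?_, ?_⟩
    · have hpx : p.mkQ x = 0 := by
        rw [Submodule.mkQ_apply, Submodule.Quotient.mk_eq_zero]
        exact Submodule.mem_span_singleton_self x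
      simp [LinearMap.comp_apply, hpx]
    · simpa using hg
  set z : V ⊗[k] V := x ⊗ₜ y - y ⊗ₜ (θ x) with hz
  have hz0 : z ≠ 0 := by
    intro h
    let L : V ⊗[k] V →ₗ[k] V := TensorProduct.lift ((LinearMap.lsmul k V).comp f)
    have hL : L z = f x • y - f y • θ x := by
      simp [hz, L]
    rw [h] at hL
    have : f y • θ x = 0 := by
      rw [hfx] at hL
      simpa using hL.symm
    have hθ : θ x = 0 := by
      rcases smul_eq_zero.mp this with h' | h'
      · exact absurd h' hfy
      · exact h'
    exact hx0 (by simpa using congrArg θ.symm (hθ.trans (map_zero θ).symm))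
  have hzQ : z ∈ leftTensor Q := by
    exact ⟨a ⊗ₜ y - c ⊗ₜ (θ x), by simp [hz, hx, hy]⟩
  have hzR : z ∈ R := by
    rw [hR]
    exact Submodule.subset_span ⟨x, y, rfl⟩
  intro hbot
  have : z ∈ (⊥ : Submodule k (V ⊗[k] V)) := hbot ▸ Submodule.mem_inf.mpr ⟨hzQ, hzR⟩
  exact hz0 (Submodule.mem_bot k |>.mp this)
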